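/- arXiv:2001.01920 — 2 statements merged into one kernel-verified Lean document; each statement's English description precedes it below -/
import Mathlib

section
/- (Theorem 1, sufficient decrease, convex case.) Fix a base point w₀ ∈ ℝ^d, μ > 0, γ ∈ [0,1) and B ≥ 1. Suppose each F_k is convex with L-Lipschitz gradient, f has L-Lipschitz gradient, and the local functions are B-locally dissimilar at w₀, i.e. Σ_{k=1}^N p_k ‖∇F_k(w₀)‖² ≤ B² ‖∇f(w₀)‖². Let k_1, …, k_K be i.i.d. random device indices, each taking value k with probability p_k; set g = (1/K) Σ_{i=1}^K ∇F_{k_i}(w₀); and let j be a further random device index with the same distribution, independent of (k_1, …, k_K). For each device m and each realization of g, let w_m(g) be a γ-inexact minimizer of the FedDANE subproblem P_m with base point w₀, gradient estimate g and penalty μ. Define ρ = (2 − 3γ)/(2μ) − (2L(1+γ)² + 3L)/(2μ²) − (B² − 1)((L(1+γ)² + L)/μ² + γ/μ). If ρ > 0, then E[f(w_j(g))] ≤ f(w₀) − ρ ‖∇f(w₀)‖², where the expectation is over the random indices (k_1, …, k_K) and j. -/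
open scoped RealInnerProductSpace

/-!
Optimality of the exact minimizer `wbar` of the subproblem gives
`μ (wbar - w₀) = -(g + ∇F(wbar) - ∇F(w₀))`; pairing with `wbar - w₀` and using monotonicity of the
gradient of the convex `F` yields `‖wbar - w₀‖ ≤ ‖g‖ / μ`, hence `‖w - w₀‖ ≤ (1 + γ) ‖g‖ / μ`.
The descent lemma for `f` at `w₀` then bounds `f w` by `f w₀ - ⟪∇f w₀, g⟫ / μ` plus terms
quadratic in `‖∇f w₀‖` and `‖g‖`. Averaged over the sample, `g` is unbiased for `∇f w₀`, and by
Jensen its second moment is at most `∑ p_k ‖∇F_k w₀‖² ≤ B² ‖∇f w₀‖²`.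
-/

section Expectation

variable {κ : Type*} [Fintype κ] {q : κ → ℝ}

theorem sum_mul_le_of_forall_le (hq0 : ∀ k, 0 ≤ q k) (hq : ∑ k, q k = 1) {X : κ → ℝ} {a : ℝ}
    (hX : ∀ k, X k ≤ a) : ∑ k, q k * X k ≤ a :=
  calc ∑ k, q k * X k ≤ ∑ k, q k * a := by gcongr with k; exacts [hq0 k, hX k]
    _ = a := by rw [← Finset.sum_mul, hq, one_mul]

theorem sum_mul_le_of_le_affine (hq0 : ∀ k, 0 ≤ q k) (hq : ∑ k, q k = 1) {X Y Z : κ → ℝ}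
    {a b c y z : ℝ} (hc : 0 ≤ c) (hX : ∀ k, X k ≤ a - b * Y k + c * Z k)
    (hY : ∑ k, q k * Y k = y) (hZ : ∑ k, q k * Z k ≤ z) : ∑ k, q k * X k ≤ a - b * y + c * z :=
  calc ∑ k, q k * X k ≤ ∑ k, q k * (a - b * Y k + c * Z k) := by
        gcongr with k; exacts [hq0 k, hX k]
    _ = a * ∑ k, q k - b * ∑ k, q k * Y k + c * ∑ k, q k * Z k := by
        simp only [Finset.mul_sum, ← Finset.sum_sub_distrib, ← Finset.sum_add_distrib]
        exact Finset.sum_congr rfl fun k _ => by ring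
    _ ≤ a - b * y + c * z := by rw [hq, mul_one, hY]; gcongr

end Expectation

section Sampling

variable {ι α : Type*} [Fintype ι] [DecidableEq ι] [Fintype α]

theorem sum_prod_mul_apply {R : Type*} [CommSemiring R] (p : α → R) (hp : ∑ a, p a = 1)
    (h : α → R) (i : ι) :
    ∑ σ : ι → α, (∏ j, p (σ j)) * h (σ i) = ∑ a, p a * h a := by
  have hfactor : ∀ σ : ι → α,
      (∏ j, p (σ j)) * h (σ i) = ∏ j, p (σ j) * if j = i then h (σ j) else 1 := by
    intro σ
    rw [Finset.prod_mul_distrib, Finset.prod_ite_eq' Finset.univ i, if_pos (Finset.mem_univ i)]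
  simp_rw [hfactor]
  have hexpand := Finset.prod_univ_sum (fun _ : ι => (Finset.univ : Finset α))
    (fun j a => p a * if j = i then h a else 1)
  rw [Fintype.piFinset_univ] at hexpand
  rw [← hexpand]
  have hcoord : ∀ j, ∑ a, p a * (if j = i then h a else 1) =
      if j = i then ∑ a, p a * h a else 1 := by
    intro j; split_ifs <;> simp [hp]
  simp only [hcoord, Finset.prod_ite_eq' Finset.univ i, Finset.mem_univ, if_true]

theorem sum_prod_apply {R : Type*} [CommSemiring R] (p : α → R) (hp : ∑ a, p a = 1) :
    ∑ σ : ι → α, ∏ j, p (σ j) = 1 := by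
  have hexpand := Finset.prod_univ_sum (fun _ : ι => (Finset.univ : Finset α)) fun _ a => p a
  rw [Fintype.piFinset_univ] at hexpand
  simp [← hexpand, hp]

theorem sum_prod_mul_sum_apply {R : Type*} [CommSemiring R] (p : α → R) (hp : ∑ a, p a = 1)
    (h : α → R) :
    ∑ σ : ι → α, (∏ j, p (σ j)) * ∑ i, h (σ i) = Fintype.card ι * ∑ a, p a * h a := by
  simp only [Finset.mul_sum]
  rw [Finset.sum_comm]
  simp [sum_prod_mul_apply p hp, Finset.mul_sum]

variable {E : Type*} [NormedAddCommGroup E] [InnerProductSpace ℝ E]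

theorem sum_prod_mul_inner_sampleMean [Nonempty ι] {p : α → ℝ} (hp : ∑ a, p a = 1)
    (v : α → E) (u : E) :
    ∑ σ : ι → α, (∏ j, p (σ j)) * ⟪u, (1 / (Fintype.card ι : ℝ)) • ∑ i, v (σ i)⟫ =
      ⟪u, ∑ a, p a • v a⟫ := by
  have hcard : (Fintype.card ι : ℝ) ≠ 0 := Nat.cast_ne_zero.mpr Fintype.card_ne_zero
  simp only [real_inner_smul_right, inner_sum, mul_left_comm _ (1 / _ : ℝ), ← Finset.mul_sum]
  rw [sum_prod_mul_sum_apply p hp fun a => ⟪u, v a⟫]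
  field_simp

theorem sum_prod_mul_norm_sampleMean_sq_le {p : α → ℝ} (hp0 : ∀ a, 0 ≤ p a)
    (hp : ∑ a, p a = 1) (v : α → E) :
    ∑ σ : ι → α, (∏ j, p (σ j)) * ‖(1 / (Fintype.card ι : ℝ)) • ∑ i, v (σ i)‖ ^ 2 ≤
      ∑ a, p a * ‖v a‖ ^ 2 := by
  have hjensen : ∀ σ : ι → α, ‖(1 / (Fintype.card ι : ℝ)) • ∑ i, v (σ i)‖ ^ 2 ≤
      1 / Fintype.card ι * ∑ i, ‖v (σ i)‖ ^ 2 := by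
    intro σ
    calc ‖(1 / (Fintype.card ι : ℝ)) • ∑ i, v (σ i)‖ ^ 2
        ≤ ((∑ i, ‖v (σ i)‖) / Fintype.card ι) ^ 2 := by
          rw [norm_smul, Real.norm_of_nonneg (by positivity), one_div_mul_eq_div]
          gcongr
          exact norm_sum_le _ _
      _ ≤ _ := by rw [one_div_mul_eq_div]; exact sum_div_card_sq_le_sum_sq_div_card
  calc _ ≤ ∑ σ : ι → α, (∏ j, p (σ j)) * (1 / Fintype.card ι * ∑ i, ‖v (σ i)‖ ^ 2) :=
        Finset.sum_le_sum fun σ _ =>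
          mul_le_mul_of_nonneg_left (hjensen σ) (Finset.prod_nonneg fun j _ => hp0 _)
    _ ≤ ∑ a, p a * ‖v a‖ ^ 2 := by
      simp only [mul_left_comm _ (1 / _ : ℝ), ← Finset.mul_sum]
      rw [sum_prod_mul_sum_apply p hp fun a => ‖v a‖ ^ 2, ← mul_assoc]
      refine mul_le_of_le_one_left (Finset.sum_nonneg fun a _ => by have := hp0 a; positivity) ?_
      rw [one_div_mul_eq_div]
      exact div_self_le_one _

end Sampling

section Gradient

variable {E : Type*} [NormedAddCommGroup E] [InnerProductSpace ℝ E] [CompleteSpace E]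

theorem ConvexOn.add_inner_gradient_le {G : E → ℝ} (hconv : ConvexOn ℝ Set.univ G) {x : E}
    (hx : DifferentiableAt ℝ G x) (y : E) : G x + ⟪gradient G x, y - x⟫ ≤ G y := by
  have hline : ConvexOn ℝ Set.univ (G ∘ AffineMap.lineMap (k := ℝ) x y) := by
    simpa using hconv.comp_affineMap (AffineMap.lineMap x y)
  have hderiv : HasDerivAt (G ∘ AffineMap.lineMap (k := ℝ) x y) ⟪gradient G x, y - x⟫ 0 := by
    have := (AffineMap.lineMap_apply_zero (k := ℝ) x y ▸ hx).hasFDerivAt.comp_hasDerivAt (0 : ℝ)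
      AffineMap.hasDerivAt_lineMap
    rwa [AffineMap.lineMap_apply_zero, ← inner_gradient_left] at this
  have := hline.le_slope_of_hasDerivAt (Set.mem_univ 0) (Set.mem_univ 1) one_pos hderiv
  simp only [slope_def_field, Function.comp_apply, AffineMap.lineMap_apply_zero,
    AffineMap.lineMap_apply_one, sub_zero, div_one] at this
  linarith

theorem ConvexOn.inner_gradient_sub_nonneg {G : E → ℝ} (hconv : ConvexOn ℝ Set.univ G) {x y : E}
    (hx : DifferentiableAt ℝ G x) (hy : DifferentiableAt ℝ G y) :
    0 ≤ ⟪gradient G x - gradient G y, x - y⟫ := by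
  have hxy := hconv.add_inner_gradient_le hx y
  have hyx := hconv.add_inner_gradient_le hy x
  rw [← neg_sub x y, inner_neg_right] at hxy
  rw [inner_sub_left]
  linarith

theorem norm_fderiv_sub_fderiv_eq_norm_gradient_sub {f : E → ℝ} (x y : E) :
    ‖fderiv ℝ f x - fderiv ℝ f y‖ = ‖gradient f x - gradient f y‖ := by
  rw [← toDual_gradient, ← toDual_gradient, ← map_sub, LinearIsometryEquiv.norm_map]

theorem image_le_add_inner_gradient_add_mul_norm_sq {f : E → ℝ} (hf : Differentiable ℝ f)
    {L : ℝ} (hL : 0 ≤ L) (hlip : ∀ a b, ‖gradient f a - gradient f b‖ ≤ L * ‖a - b‖) (x y : E) :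
    f y ≤ f x + ⟪gradient f x, y - x⟫ + L * ‖y - x‖ ^ 2 := by
  have hmvt : ‖f y - f x - fderiv ℝ f x (y - x)‖ ≤ L * ‖y - x‖ * ‖y - x‖ := by
    refine Convex.norm_image_sub_le_of_norm_fderiv_le' (fun z _ => hf z) (fun z hz => ?_)
      (convex_segment x y) (left_mem_segment ℝ x y) (right_mem_segment ℝ x y)
    rw [norm_fderiv_sub_fderiv_eq_norm_gradient_sub]
    exact (hlip z x).trans (mul_le_mul_of_nonneg_left (norm_sub_le_of_mem_segment hz) hL)
  rw [← inner_gradient_left] at hmvt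
  have := (abs_le.mp (Real.norm_eq_abs _ ▸ hmvt)).2
  rw [mul_assoc, ← sq] at this
  linarith

theorem gradient_sum_mul {ι : Type*} (s : Finset ι) (c : ι → ℝ) {F : ι → E → ℝ} {x : E}
    (hF : ∀ k ∈ s, DifferentiableAt ℝ (F k) x) :
    gradient (fun y => ∑ k ∈ s, c k * F k y) x = ∑ k ∈ s, c k • gradient (F k) x := by
  refine HasGradientAt.gradient ?_
  rw [hasGradientAt_iff_hasFDerivAt, map_sum]
  exact HasFDerivAt.fun_sum fun k hk => by
    simpa only [map_smul] using (hF k hk).hasGradientAt.hasFDerivAt.const_mul (c k)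

end Gradient

section FedDANE

variable {E : Type*} [NormedAddCommGroup E] [InnerProductSpace ℝ E] [CompleteSpace E]

noncomputable def feddaneSubproblem (G : E → ℝ) (w₀ g : E) (μ : ℝ) (v : E) : ℝ :=
  G v + ⟪g - gradient G w₀, v - w₀⟫ + μ / 2 * ‖v - w₀‖ ^ 2

theorem IsLocalMin.hasGradientAt_eq_zero {f : E → ℝ} {a g : E} (h : IsLocalMin f a)
    (hg : HasGradientAt f g a) : g = 0 :=
  (InnerProductSpace.toDual ℝ E).map_eq_zero_iff.mp (h.hasFDerivAt_eq_zero hg.hasFDerivAt)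

theorem hasGradientAt_feddaneSubproblem {G : E → ℝ} {v : E} (hG : DifferentiableAt ℝ G v)
    (w₀ g : E) (μ : ℝ) :
    HasGradientAt (feddaneSubproblem G w₀ g μ)
      (gradient G v + (g - gradient G w₀) + μ • (v - w₀)) v := by
  have hsub : HasFDerivAt (fun x : E => x - w₀) (ContinuousLinearMap.id ℝ E) v :=
    (hasFDerivAt_id v).sub_const w₀
  have hP := (hG.hasFDerivAt.add ((innerSL ℝ (g - gradient G w₀)).hasFDerivAt.comp v hsub)).add
    (hsub.norm_sq.const_mul (μ / 2))
  rw [hasGradientAt_iff_hasFDerivAt]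
  refine HasFDerivAt.congr_fderiv (f := feddaneSubproblem G w₀ g μ) hP
    (ContinuousLinearMap.ext fun h => ?_)
  simp only [add_apply, smul_apply, ContinuousLinearMap.comp_id, coe_innerSL_apply, map_add,
    map_smul, toDual_gradient, InnerProductSpace.toDual_apply_apply, real_inner_comm h,
    nsmul_eq_mul, smul_eq_mul]
  ring

variable {G : E → ℝ} {w₀ g wbar : E} {μ : ℝ}

theorem smul_sub_eq_of_feddaneSubproblem_min (hG : DifferentiableAt ℝ G wbar)
    (hmin : ∀ v, feddaneSubproblem G w₀ g μ wbar ≤ feddaneSubproblem G w₀ g μ v) :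
    μ • (wbar - w₀) = -(g + (gradient G wbar - gradient G w₀)) := by
  have hzero := IsLocalMin.hasGradientAt_eq_zero (Filter.Eventually.of_forall hmin)
    (hasGradientAt_feddaneSubproblem hG w₀ g μ)
  rw [← sub_eq_zero, ← hzero]
  abel

theorem norm_sub_le_of_feddaneSubproblem_min (hconv : ConvexOn ℝ Set.univ G)
    (hG : Differentiable ℝ G) (hμ : 0 < μ)
    (hmin : ∀ v, feddaneSubproblem G w₀ g μ wbar ≤ feddaneSubproblem G w₀ g μ v) :
    ‖wbar - w₀‖ ≤ μ⁻¹ * ‖g‖ := by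
  have hmono := hconv.inner_gradient_sub_nonneg (hG wbar) (hG w₀)
  have hsq : μ * ‖wbar - w₀‖ ^ 2 ≤ ‖g‖ * ‖wbar - w₀‖ :=
    calc μ * ‖wbar - w₀‖ ^ 2 = ⟪μ • (wbar - w₀), wbar - w₀⟫ := by
          rw [real_inner_smul_left, real_inner_self_eq_norm_sq]
      _ = -⟪g, wbar - w₀⟫ - ⟪gradient G wbar - gradient G w₀, wbar - w₀⟫ := by
          rw [smul_sub_eq_of_feddaneSubproblem_min (hG wbar) hmin, inner_neg_left, inner_add_left]
          ring
      _ ≤ ‖g‖ * ‖wbar - w₀‖ := by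
          linarith [(neg_le_abs _).trans (abs_real_inner_le_norm g (wbar - w₀))]
  rw [le_inv_mul_iff₀ hμ]
  rcases (norm_nonneg (wbar - w₀)).eq_or_lt with hzero | hpos
  · rw [← hzero, mul_zero]
    exact norm_nonneg g
  · nlinarith

theorem inner_sub_le_of_feddaneSubproblem_min (hG : Differentiable ℝ G) {L : ℝ}
    (hGlip : ∀ x y, ‖gradient G x - gradient G y‖ ≤ L * ‖x - y‖) (hμ : 0 < μ)
    (hmin : ∀ v, feddaneSubproblem G w₀ g μ wbar ≤ feddaneSubproblem G w₀ g μ v) (u : E) :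
    ⟪u, wbar - w₀⟫ ≤ -(μ⁻¹ * ⟪u, g⟫) + μ⁻¹ * (L * ‖u‖ * ‖wbar - w₀‖) := by
  have hwbar : wbar - w₀ = μ⁻¹ • -(g + (gradient G wbar - gradient G w₀)) := by
    rw [← smul_sub_eq_of_feddaneSubproblem_min (hG wbar) hmin, inv_smul_smul₀ hμ.ne']
  have hΔ : -⟪u, gradient G wbar - gradient G w₀⟫ ≤ L * ‖u‖ * ‖wbar - w₀‖ :=
    calc -⟪u, gradient G wbar - gradient G w₀⟫ ≤ ‖u‖ * ‖gradient G wbar - gradient G w₀‖ :=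
          (neg_le_abs _).trans (abs_real_inner_le_norm _ _)
      _ ≤ ‖u‖ * (L * ‖wbar - w₀‖) := mul_le_mul_of_nonneg_left (hGlip wbar w₀) (norm_nonneg u)
      _ = L * ‖u‖ * ‖wbar - w₀‖ := by ring
  calc ⟪u, wbar - w₀⟫ = -(μ⁻¹ * ⟪u, g⟫) + μ⁻¹ * -⟪u, gradient G wbar - gradient G w₀⟫ := by
        rw [hwbar, real_inner_smul_right, inner_neg_right, inner_add_right]
        ring
    _ ≤ -(μ⁻¹ * ⟪u, g⟫) + μ⁻¹ * (L * ‖u‖ * ‖wbar - w₀‖) := by gcongr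

theorem le_of_feddaneSubproblem_inexact_min (hconv : ConvexOn ℝ Set.univ G)
    (hG : Differentiable ℝ G) {f : E → ℝ} (hf : Differentiable ℝ f) {L γ : ℝ} (hL : 0 ≤ L)
    (hGlip : ∀ x y, ‖gradient G x - gradient G y‖ ≤ L * ‖x - y‖)
    (hflip : ∀ x y, ‖gradient f x - gradient f y‖ ≤ L * ‖x - y‖) (hμ : 0 < μ) (hγ : 0 ≤ γ)
    (hmin : ∀ v, feddaneSubproblem G w₀ g μ wbar ≤ feddaneSubproblem G w₀ g μ v) {w : E}
    (hinexact : ‖w - wbar‖ ≤ γ * ‖wbar - w₀‖) :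
    f w ≤ f w₀ - μ⁻¹ * ⟪gradient f w₀, g⟫ +
      (L * μ⁻¹ ^ 2 + γ * μ⁻¹) / 2 * (‖gradient f w₀‖ ^ 2 + ‖g‖ ^ 2) +
      L * (1 + γ) ^ 2 * μ⁻¹ ^ 2 * ‖g‖ ^ 2 := by
  set u := gradient f w₀
  have hwbar := norm_sub_le_of_feddaneSubproblem_min hconv hG hμ hmin
  have hw : ‖w - w₀‖ ≤ (1 + γ) * (μ⁻¹ * ‖g‖) :=
    calc ‖w - w₀‖ ≤ ‖w - wbar‖ + ‖wbar - w₀‖ := norm_sub_le_norm_sub_add_norm_sub w wbar w₀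
      _ ≤ (1 + γ) * ‖wbar - w₀‖ := by linarith
      _ ≤ (1 + γ) * (μ⁻¹ * ‖g‖) := by gcongr
  have hinner : ⟪u, w - w₀⟫ ≤ -(μ⁻¹ * ⟪u, g⟫) + (L * μ⁻¹ ^ 2 + γ * μ⁻¹) * (‖u‖ * ‖g‖) :=
    calc ⟪u, w - w₀⟫ = ⟪u, wbar - w₀⟫ + ⟪u, w - wbar⟫ := by
          rw [← inner_add_right, sub_add_sub_cancel']
      _ ≤ -(μ⁻¹ * ⟪u, g⟫) + μ⁻¹ * (L * ‖u‖ * ‖wbar - w₀‖) + ‖u‖ * (γ * ‖wbar - w₀‖) :=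
          add_le_add (inner_sub_le_of_feddaneSubproblem_min hG hGlip hμ hmin u)
            ((real_inner_le_norm _ _).trans (by gcongr))
      _ ≤ -(μ⁻¹ * ⟪u, g⟫) + μ⁻¹ * (L * ‖u‖ * (μ⁻¹ * ‖g‖)) + ‖u‖ * (γ * (μ⁻¹ * ‖g‖)) := by
          gcongr
      _ = -(μ⁻¹ * ⟪u, g⟫) + (L * μ⁻¹ ^ 2 + γ * μ⁻¹) * (‖u‖ * ‖g‖) := by ring
  have hamgm := mul_le_mul_of_nonneg_left (two_mul_le_add_sq ‖u‖ ‖g‖)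
    (by positivity : 0 ≤ L * μ⁻¹ ^ 2 + γ * μ⁻¹)
  calc f w ≤ f w₀ + ⟪u, w - w₀⟫ + L * ‖w - w₀‖ ^ 2 :=
        image_le_add_inner_gradient_add_mul_norm_sq hf hL hflip w₀ w
    _ ≤ f w₀ + (-(μ⁻¹ * ⟪u, g⟫) + (L * μ⁻¹ ^ 2 + γ * μ⁻¹) * (‖u‖ * ‖g‖)) +
        L * ((1 + γ) * (μ⁻¹ * ‖g‖)) ^ 2 := by gcongr
    _ ≤ _ := by linarith

end FedDANE

theorem feddane_rate_le {μ γ L B : ℝ} (hμ : 0 < μ) (hγ : 0 ≤ γ) (hL : 0 ≤ L) :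
    (2 - 3 * γ) / (2 * μ) - (2 * L * (1 + γ) ^ 2 + 3 * L) / (2 * μ ^ 2) -
        (B ^ 2 - 1) * ((L * (1 + γ) ^ 2 + L) / μ ^ 2 + γ / μ) ≤
      μ⁻¹ - (L * μ⁻¹ ^ 2 + γ * μ⁻¹) / 2 * (1 + B ^ 2) - L * (1 + γ) ^ 2 * μ⁻¹ ^ 2 * B ^ 2 := by
  have hslack : 0 ≤ B ^ 2 / 2 * (γ * μ⁻¹ + L * μ⁻¹ ^ 2) := by positivity
  have hgap : μ⁻¹ - (L * μ⁻¹ ^ 2 + γ * μ⁻¹) / 2 * (1 + B ^ 2) - L * (1 + γ) ^ 2 * μ⁻¹ ^ 2 * B ^ 2 -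
      ((2 - 3 * γ) / (2 * μ) - (2 * L * (1 + γ) ^ 2 + 3 * L) / (2 * μ ^ 2) -
        (B ^ 2 - 1) * ((L * (1 + γ) ^ 2 + L) / μ ^ 2 + γ / μ)) =
      B ^ 2 / 2 * (γ * μ⁻¹ + L * μ⁻¹ ^ 2) := by
    field_simp
    ring
  linarith

theorem feddane_sufficient_decrease_convex_general {d N K : ℕ} (hK : 0 < K)
    (F : Fin N → EuclideanSpace ℝ (Fin d) → ℝ) (hF : ∀ k, ContDiff ℝ 1 (F k))
    (p : Fin N → ℝ) (hp : ∀ k, 0 ≤ p k) (hpsum : ∑ k, p k = 1)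
    (f : EuclideanSpace ℝ (Fin d) → ℝ) (hf : f = fun w => ∑ k, p k * F k w)
    (w₀ : EuclideanSpace ℝ (Fin d)) (μ γ L B : ℝ)
    (hμ : 0 < μ) (hγ0 : 0 ≤ γ) (hL : 0 ≤ L)
    (hconv : ∀ k, ConvexOn ℝ Set.univ (F k))
    (hFlip : ∀ k x y, ‖gradient (F k) x - gradient (F k) y‖ ≤ L * ‖x - y‖)
    (hflip : ∀ x y, ‖gradient f x - gradient f y‖ ≤ L * ‖x - y‖)
    (hdissim : ∑ k, p k * ‖gradient (F k) w₀‖ ^ 2 ≤ B ^ 2 * ‖gradient f w₀‖ ^ 2)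
    (gs : (Fin K → Fin N) → EuclideanSpace ℝ (Fin d))
    (hgs : gs = fun σ => (1 / (K : ℝ)) • ∑ i, gradient (F (σ i)) w₀)
    (P : Fin N → EuclideanSpace ℝ (Fin d) → EuclideanSpace ℝ (Fin d) → ℝ)
    (hP : P = fun m gv v =>
      F m v + ⟪gv - gradient (F m) w₀, v - w₀⟫ + μ / 2 * ‖v - w₀‖ ^ 2)
    (w wbar : Fin N → (Fin K → Fin N) → EuclideanSpace ℝ (Fin d))
    (hmin : ∀ m σ v, P m (gs σ) (wbar m σ) ≤ P m (gs σ) v)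
    (hinexact : ∀ m σ, ‖w m σ - wbar m σ‖ ≤ γ * ‖wbar m σ - w₀‖)
    (ρ : ℝ)
    (hρ : ρ = (2 - 3 * γ) / (2 * μ) - (2 * L * (1 + γ) ^ 2 + 3 * L) / (2 * μ ^ 2) -
      (B ^ 2 - 1) * ((L * (1 + γ) ^ 2 + L) / μ ^ 2 + γ / μ)) :
    (∑ σ : Fin K → Fin N, ∑ j : Fin N,
        ((∏ i, p (σ i)) * p j) * f (w j σ)) ≤
      f w₀ - ρ * ‖gradient f w₀‖ ^ 2 := by
  have := Fin.pos_iff_nonempty.mp hK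
  have hFdiff k : Differentiable ℝ (F k) := (hF k).differentiable one_ne_zero
  have hfdiff : Differentiable ℝ f :=
    hf ▸ Differentiable.fun_sum fun k _ => (hFdiff k).const_mul (p k)
  have hgradf : gradient f w₀ = ∑ k, p k • gradient (F k) w₀ :=
    hf ▸ gradient_sum_mul _ p fun k _ => hFdiff k w₀
  have hstep j σ : f (w j σ) ≤ f w₀ + (L * μ⁻¹ ^ 2 + γ * μ⁻¹) / 2 * ‖gradient f w₀‖ ^ 2 -
      μ⁻¹ * ⟪gradient f w₀, gs σ⟫ +
      ((L * μ⁻¹ ^ 2 + γ * μ⁻¹) / 2 + L * (1 + γ) ^ 2 * μ⁻¹ ^ 2) * ‖gs σ‖ ^ 2 := by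
    have := le_of_feddaneSubproblem_inexact_min (hconv j) (hFdiff j) hfdiff hL (hFlip j) hflip hμ
      hγ0 (by subst hP; exact hmin j σ) (hinexact j σ)
    linarith
  have hmean :
      ∑ σ : Fin K → Fin N, (∏ i, p (σ i)) * ⟪gradient f w₀, gs σ⟫ = ‖gradient f w₀‖ ^ 2 := by
    have := sum_prod_mul_inner_sampleMean (ι := Fin K) hpsum (fun k => gradient (F k) w₀)
      (gradient f w₀)
    subst hgs
    rwa [Fintype.card_fin, ← hgradf, real_inner_self_eq_norm_sq] at this
  have hvar :
      ∑ σ : Fin K → Fin N, (∏ i, p (σ i)) * ‖gs σ‖ ^ 2 ≤ B ^ 2 * ‖gradient f w₀‖ ^ 2 := by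
    have := sum_prod_mul_norm_sampleMean_sq_le (ι := Fin K) hp hpsum fun k => gradient (F k) w₀
    subst hgs
    rw [Fintype.card_fin] at this
    exact this.trans hdissim
  calc _ = ∑ σ : Fin K → Fin N, (∏ i, p (σ i)) * ∑ j, p j * f (w j σ) := by
        simp only [Finset.mul_sum, mul_assoc]
    _ ≤ _ := sum_mul_le_of_le_affine (fun σ => Finset.prod_nonneg fun i _ => hp (σ i))
        (sum_prod_apply p hpsum) (by positivity)
        (fun σ => sum_mul_le_of_forall_le hp hpsum fun j => hstep j σ) hmean hvar
    _ ≤ f w₀ - ρ * ‖gradient f w₀‖ ^ 2 := by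
        have := mul_le_mul_of_nonneg_right (hρ ▸ feddane_rate_le (B := B) hμ hγ0 hL)
          (sq_nonneg ‖gradient f w₀‖)
        linarith

/-- Theorem 1, sufficient decrease, convex case.  Each `F k` is
convex with `L`-Lipschitz gradient, `f` has `L`-Lipschitz gradient, and the local
functions are `B`-locally dissimilar at `w₀`.  Sample `K` i.i.d. device indices
(expectation = sum over `σ : Fin K → Fin N` with weight `∏ i, p (σ i)`), set
`gs σ = (1/K) ∑ i, ∇F_{σ i}(w₀)`, and sample an independent device `j` with
probability `p j`.  For each device `m` and each realization `σ`, `w m σ` is a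
`γ`-inexact minimizer of the FedDANE subproblem with gradient estimate `gs σ`.
If `ρ = (2-3γ)/(2μ) - (2L(1+γ)²+3L)/(2μ²) - (B²-1)((L(1+γ)²+L)/μ² + γ/μ) > 0`,
then `E[f(w_j(g))] ≤ f(w₀) - ρ ‖∇f(w₀)‖²`. -/
theorem feddane_sufficient_decrease_convex {d N K : ℕ} (hK : 0 < K)
    (F : Fin N → EuclideanSpace ℝ (Fin d) → ℝ) (hF : ∀ k, ContDiff ℝ 1 (F k))
    (p : Fin N → ℝ) (hp : ∀ k, 0 ≤ p k) (hpsum : ∑ k, p k = 1)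
    (f : EuclideanSpace ℝ (Fin d) → ℝ) (hf : f = fun w => ∑ k, p k * F k w)
    (w₀ : EuclideanSpace ℝ (Fin d)) (μ γ L B : ℝ)
    (hμ : 0 < μ) (hγ0 : 0 ≤ γ) (hγ1 : γ < 1) (hL : 0 ≤ L) (hB : 1 ≤ B)
    (hconv : ∀ k, ConvexOn ℝ Set.univ (F k))
    (hFlip : ∀ k x y, ‖gradient (F k) x - gradient (F k) y‖ ≤ L * ‖x - y‖)
    (hflip : ∀ x y, ‖gradient f x - gradient f y‖ ≤ L * ‖x - y‖)
    (hdissim : ∑ k, p k * ‖gradient (F k) w₀‖ ^ 2 ≤ B ^ 2 * ‖gradient f w₀‖ ^ 2)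
    (gs : (Fin K → Fin N) → EuclideanSpace ℝ (Fin d))
    (hgs : gs = fun σ => (1 / (K : ℝ)) • ∑ i, gradient (F (σ i)) w₀)
    (P : Fin N → EuclideanSpace ℝ (Fin d) → EuclideanSpace ℝ (Fin d) → ℝ)
    (hP : P = fun m gv v =>
      F m v + ⟪gv - gradient (F m) w₀, v - w₀⟫ + μ / 2 * ‖v - w₀‖ ^ 2)
    (w wbar : Fin N → (Fin K → Fin N) → EuclideanSpace ℝ (Fin d))
    (hmin : ∀ m σ v, P m (gs σ) (wbar m σ) ≤ P m (gs σ) v)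
    (hinexact : ∀ m σ, ‖w m σ - wbar m σ‖ ≤ γ * ‖wbar m σ - w₀‖)
    (ρ : ℝ)
    (hρ : ρ = (2 - 3 * γ) / (2 * μ) - (2 * L * (1 + γ) ^ 2 + 3 * L) / (2 * μ ^ 2) -
      (B ^ 2 - 1) * ((L * (1 + γ) ^ 2 + L) / μ ^ 2 + γ / μ))
    (hρpos : 0 < ρ) :
    (∑ σ : Fin K → Fin N, ∑ j : Fin N,
        ((∏ i, p (σ i)) * p j) * f (w j σ)) ≤
      f w₀ - ρ * ‖gradient f w₀‖ ^ 2 :=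
  feddane_sufficient_decrease_convex_general hK F hF p hp hpsum f hf w₀ μ γ L B hμ hγ0 hL hconv
    hFlip hflip hdissim gs hgs P hP w wbar hmin hinexact ρ hρ
end

section
/- (Theorem 2, sufficient decrease, non-convex case.) Fix a base point w₀ ∈ ℝ^d, constants λ ≥ 0, μ > λ, γ ∈ [0,1) and B ≥ 1. Suppose each F_k has L-Lipschitz gradient and is λ-weakly convex (w ↦ F_k(w) + (λ/2)‖w‖² is convex), f has L-Lipschitz gradient, and the local functions are B-locally dissimilar at w₀. Let k_1, …, k_K be i.i.d. random device indices, each taking value k with probability p_k; set g = (1/K) Σ_{i=1}^K ∇F_{k_i}(w₀); and let j be a further random device index with the same distribution, independent of (k_1, …, k_K). For each device m and each realization of g, let w_m(g) be a γ-inexact minimizer of the FedDANE subproblem P_m with base point w₀, gradient estimate g and penalty μ. Define ρ = 1/μ − 3γ/(2(μ−λ)) − L(1+γ)²/(μ−λ)² − 3L/(2μ(μ−λ)) − (B² − 1)(L(1+γ)²/(μ−λ)² + L/(μ(μ−λ)) + γ/(μ−λ)). If ρ > 0, then E[f(w_j(g))] ≤ f(w₀) − ρ ‖∇f(w₀)‖²,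 where the expectation is over the random indices (k_1, …, k_K) and j. -/
/-!
At the exact minimizer `w̄` of the FedDANE subproblem the gradient vanishes:
`μ (w̄ - w₀) = -g - (∇F(w̄) - ∇F(w₀))`. Pairing this with `w̄ - w₀` and using `λ`-weak
convexity (`⟪∇F(w̄) - ∇F(w₀), w̄ - w₀⟫ ≥ -λ ‖w̄ - w₀‖²`) gives `(μ - λ) ‖w̄ - w₀‖ ≤ ‖g‖`.
The descent lemma for `f` at `w₀`, split along `w - w₀ = (w - w̄) + (w̄ - w₀)`, bounds `f(w)` by
`f(w₀) - ⟪∇f(w₀), g⟫ / μ` plus terms of order `‖∇f(w₀)‖ ‖g‖` and `‖g‖²`. Averaging over the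
sampled devices, `g` is an unbiased estimate of `∇f(w₀)`, and by Jensen and `B`-local
dissimilarity its second moment is at most `B² ‖∇f(w₀)‖²`.
-/

open scoped RealInnerProductSpace

theorem ConvexOn.add_le_of_hasFDerivAt {E : Type*} [NormedAddCommGroup E] [NormedSpace ℝ E]
    {h : E → ℝ} {h' : E →L[ℝ] ℝ} {x : E} (hc : ConvexOn ℝ Set.univ h)
    (hx : HasFDerivAt h h' x) (y : E) : h x + h' (y - x) ≤ h y := by
  have hline : ConvexOn ℝ Set.univ (h ∘ AffineMap.lineMap (k := ℝ) x y) := hc.comp_affineMap _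
  have hderiv : HasDerivAt (h ∘ AffineMap.lineMap (k := ℝ) x y) (h' (y - x)) 0 := by
    refine HasFDerivAt.comp_hasDerivAt _ ?_ AffineMap.hasDerivAt_lineMap
    simpa using hx
  have hslope := hline.le_slope_of_hasDerivAt trivial trivial zero_lt_one hderiv
  simp [slope_def_field] at hslope ⊢
  linarith

section InnerProductSpace

variable {E : Type*} [NormedAddCommGroup E] [InnerProductSpace ℝ E] [CompleteSpace E]

theorem DifferentiableAt.hasFDerivAt_add_mul_norm_sq {F : E → ℝ} {x : E}
    (hx : DifferentiableAt ℝ F x) (c : ℝ) :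
    HasFDerivAt (fun w => F w + c / 2 * ‖w‖ ^ 2)
      (InnerProductSpace.toDual ℝ E (gradient F x + c • x)) x := by
  refine (hx.hasGradientAt.hasFDerivAt.fun_add
    ((hasFDerivAt_id x).norm_sq.const_mul (c / 2))).congr_fderiv ?_
  ext v
  simp
  ring

theorem neg_mul_norm_sq_le_inner_gradient_sub {F : E → ℝ} {lam : ℝ}
    (hweak : ConvexOn ℝ Set.univ fun w => F w + lam / 2 * ‖w‖ ^ 2) {x y : E}
    (hx : DifferentiableAt ℝ F x) (hy : DifferentiableAt ℝ F y) :
    -lam * ‖x - y‖ ^ 2 ≤ ⟪gradient F x - gradient F y, x - y⟫ := by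
  have hxy := hweak.add_le_of_hasFDerivAt (hx.hasFDerivAt_add_mul_norm_sq lam) y
  have hyx := hweak.add_le_of_hasFDerivAt (hy.hasFDerivAt_add_mul_norm_sq lam) x
  rw [← neg_sub x y] at hxy
  rw [← real_inner_self_eq_norm_sq]
  simp only [InnerProductSpace.toDual_apply_apply, inner_neg_right, inner_add_left,
    inner_sub_left, inner_sub_right, real_inner_smul_left] at hxy hyx ⊢
  linarith

/-- The descent lemma with `L` in place of the sharp `L / 2`, as the mean value inequality gives
it; the rate `ρ` is computed with this constant. -/
theorem le_add_inner_gradient_add_mul_norm_sq {f : E → ℝ} {L : ℝ} (hL : 0 ≤ L)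
    (hf : Differentiable ℝ f) (hlip : ∀ x y, ‖gradient f x - gradient f y‖ ≤ L * ‖x - y‖)
    (x y : E) : f y ≤ f x + ⟪gradient f x, y - x⟫ + L * ‖y - x‖ ^ 2 := by
  let φ : E → ℝ := fun v => f v - ⟪gradient f x, v⟫
  have hφ : ∀ v ∈ segment ℝ x y, HasFDerivWithinAt φ
      (InnerProductSpace.toDual ℝ E (gradient f v - gradient f x)) (segment ℝ x y) v := by
    intro v _
    rw [map_sub]
    exact ((hf v).hasGradientAt.hasFDerivAt.sub
      (InnerProductSpace.toDual ℝ E (gradient f x)).hasFDerivAt).hasFDerivWithinAt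
  have hbound : ∀ v ∈ segment ℝ x y,
      ‖InnerProductSpace.toDual ℝ E (gradient f v - gradient f x)‖ ≤ L * ‖y - x‖ := by
    intro v hv
    rw [LinearIsometryEquiv.norm_map]
    exact (hlip v x).trans (mul_le_mul_of_nonneg_left (norm_sub_le_of_mem_segment hv) hL)
  have hmvt := (convex_segment x y).norm_image_sub_le_of_norm_hasFDerivWithin_le hφ hbound
    (left_mem_segment ℝ x y) (right_mem_segment ℝ x y)
  rw [Real.norm_eq_abs] at hmvt
  rw [inner_sub_right, sq]
  linarith [(le_abs_self _).trans hmvt]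

theorem hasGradientAt_sum_mul {ι : Type*} (s : Finset ι) {F : ι → E → ℝ} (p : ι → ℝ) {x : E}
    (hF : ∀ k ∈ s, DifferentiableAt ℝ (F k) x) :
    HasGradientAt (fun w => ∑ k ∈ s, p k * F k w) (∑ k ∈ s, p k • gradient (F k) x) x := by
  rw [hasGradientAt_iff_hasFDerivAt]
  refine (HasFDerivAt.fun_sum fun k hk =>
    (hF k hk).hasGradientAt.hasFDerivAt.const_mul (p k)).congr_fderiv ?_
  ext v
  simp

theorem IsMinOn.gradient_add_add_smul_eq_zero {F : E → ℝ} {c w₀ x : E} {μ : ℝ}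
    (hx : DifferentiableAt ℝ F x)
    (hmin : IsMinOn (fun v => F v + ⟪c, v - w₀⟫ + μ / 2 * ‖v - w₀‖ ^ 2) Set.univ x) :
    gradient F x + c + μ • (x - w₀) = 0 := by
  have hderiv : HasFDerivAt (fun v => F v + ⟪c, v - w₀⟫ + μ / 2 * ‖v - w₀‖ ^ 2)
      (InnerProductSpace.toDual ℝ E (gradient F x + c + μ • (x - w₀))) x := by
    refine ((hx.hasGradientAt.hasFDerivAt.fun_add
      ((hasFDerivAt_const c x).inner ℝ ((hasFDerivAt_id x).sub_const w₀))).fun_add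
      ((((hasFDerivAt_id x).sub_const w₀).norm_sq).const_mul (μ / 2))).congr_fderiv ?_
    ext v
    simp
    ring
  exact (InnerProductSpace.toDual ℝ E).map_eq_zero_iff.mp
    ((hmin.isLocalMin Filter.univ_mem).hasFDerivAt_eq_zero hderiv)

noncomputable def fedDaneSubproblem (F : E → ℝ) (w₀ g : E) (μ : ℝ) (v : E) : ℝ :=
  F v + ⟪g - gradient F w₀, v - w₀⟫ + μ / 2 * ‖v - w₀‖ ^ 2

variable {F : E → ℝ} {w₀ g x : E} {μ : ℝ}

theorem IsMinOn.fedDane_smul_sub_eq (hx : DifferentiableAt ℝ F x)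
    (hmin : IsMinOn (fedDaneSubproblem F w₀ g μ) Set.univ x) :
    μ • (x - w₀) = -g - (gradient F x - gradient F w₀) := by
  linear_combination (norm := module) IsMinOn.gradient_add_add_smul_eq_zero hx hmin

theorem IsMinOn.fedDane_mul_norm_sub_le {lam : ℝ}
    (hweak : ConvexOn ℝ Set.univ fun w => F w + lam / 2 * ‖w‖ ^ 2)
    (hx : DifferentiableAt ℝ F x) (h₀ : DifferentiableAt ℝ F w₀)
    (hmin : IsMinOn (fedDaneSubproblem F w₀ g μ) Set.univ x) :
    (μ - lam) * ‖x - w₀‖ ≤ ‖g‖ := by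
  have hmono := neg_mul_norm_sq_le_inner_gradient_sub hweak hx h₀
  have hgrad : gradient F x - gradient F w₀ = -g - μ • (x - w₀) := by
    linear_combination (norm := module) hmin.fedDane_smul_sub_eq hx
  rw [hgrad, inner_sub_left, inner_neg_left, real_inner_smul_left,
    real_inner_self_eq_norm_sq] at hmono
  have hcs : -⟪g, x - w₀⟫ ≤ ‖g‖ * ‖x - w₀‖ :=
    (neg_le_abs _).trans (abs_real_inner_le_norm _ _)
  rcases (norm_nonneg (x - w₀)).eq_or_lt with h0 | hpos
  · rw [← h0, mul_zero]
    exact norm_nonneg g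
  · exact le_of_mul_le_mul_right (by nlinarith) hpos

theorem IsMinOn.fedDane_inexact_le {f : E → ℝ} {w : E} {Lf LF γ : ℝ} (hLf : 0 ≤ Lf)
    (hμ : 0 < μ) (hf : Differentiable ℝ f)
    (hflip : ∀ x y, ‖gradient f x - gradient f y‖ ≤ Lf * ‖x - y‖)
    (hx : DifferentiableAt ℝ F x) (hFlip : ‖gradient F x - gradient F w₀‖ ≤ LF * ‖x - w₀‖)
    (hmin : IsMinOn (fedDaneSubproblem F w₀ g μ) Set.univ x)
    (hinexact : ‖w - x‖ ≤ γ * ‖x - w₀‖) :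
    f w ≤ f w₀ - ⟪gradient f w₀, g⟫ / μ + (γ + LF / μ) * ‖gradient f w₀‖ * ‖x - w₀‖ +
      Lf * ((1 + γ) * ‖x - w₀‖) ^ 2 := by
  set G := gradient f w₀
  have hdescent := le_add_inner_gradient_add_mul_norm_sq hLf hf hflip w₀ w
  have hsplit : ⟪G, w - w₀⟫ = ⟪G, w - x⟫ + ⟪G, x - w₀⟫ := by
    rw [← inner_add_right, sub_add_sub_cancel]
  have hinexact_term : ⟪G, w - x⟫ ≤ ‖G‖ * (γ * ‖x - w₀‖) :=
    (real_inner_le_norm _ _).trans (mul_le_mul_of_nonneg_left hinexact (norm_nonneg _))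
  have hexact_term : ⟪G, x - w₀⟫ = (-⟪G, g⟫ - ⟪G, gradient F x - gradient F w₀⟫) / μ := by
    rw [eq_div_iff hμ.ne', mul_comm, ← real_inner_smul_right, hmin.fedDane_smul_sub_eq hx,
      inner_sub_right, inner_neg_right]
  have hlip_term : -⟪G, gradient F x - gradient F w₀⟫ ≤ ‖G‖ * (LF * ‖x - w₀‖) :=
    (neg_le_abs _).trans ((abs_real_inner_le_norm _ _).trans
      (mul_le_mul_of_nonneg_left hFlip (norm_nonneg _)))
  have hexact_le : (-⟪G, g⟫ - ⟪G, gradient F x - gradient F w₀⟫) / μ ≤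
      -⟪G, g⟫ / μ + LF / μ * ‖G‖ * ‖x - w₀‖ := by
    rw [div_add' _ _ _ hμ.ne', div_le_div_iff_of_pos_right hμ]
    field_simp
    linarith
  have hdist : ‖w - w₀‖ ≤ (1 + γ) * ‖x - w₀‖ := by
    linarith [norm_sub_le_norm_sub_add_norm_sub w x w₀]
  have hsq : Lf * ‖w - w₀‖ ^ 2 ≤ Lf * ((1 + γ) * ‖x - w₀‖) ^ 2 := by
    gcongr
  rw [hsplit, hexact_term] at hdescent
  linear_combination hdescent + hinexact_term + hexact_le + hsq

theorem IsMinOn.fedDane_inexact_le_of_weaklyConvex {f : E → ℝ} {w : E} {lam Lf LF γ : ℝ}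
    (hLf : 0 ≤ Lf) (hLF : 0 ≤ LF) (hγ : 0 ≤ γ) (hμ : 0 < μ) (hlam : lam < μ)
    (hf : Differentiable ℝ f) (hflip : ∀ x y, ‖gradient f x - gradient f y‖ ≤ Lf * ‖x - y‖)
    (hweak : ConvexOn ℝ Set.univ fun w => F w + lam / 2 * ‖w‖ ^ 2)
    (hx : DifferentiableAt ℝ F x) (h₀ : DifferentiableAt ℝ F w₀)
    (hFlip : ‖gradient F x - gradient F w₀‖ ≤ LF * ‖x - w₀‖)
    (hmin : IsMinOn (fedDaneSubproblem F w₀ g μ) Set.univ x)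
    (hinexact : ‖w - x‖ ≤ γ * ‖x - w₀‖) :
    f w ≤ f w₀ - ⟪gradient f w₀, g⟫ / μ +
      (γ + LF / μ) / (μ - lam) * (‖gradient f w₀‖ * ‖g‖) +
      Lf * (1 + γ) ^ 2 / (μ - lam) ^ 2 * ‖g‖ ^ 2 := by
  have hdist : ‖x - w₀‖ ≤ ‖g‖ / (μ - lam) := by
    rw [le_div_iff₀' (sub_pos.mpr hlam)]
    exact hmin.fedDane_mul_norm_sub_le hweak hx h₀
  calc f w ≤ f w₀ - ⟪gradient f w₀, g⟫ / μ + (γ + LF / μ) * ‖gradient f w₀‖ * ‖x - w₀‖ +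
        Lf * ((1 + γ) * ‖x - w₀‖) ^ 2 :=
      hmin.fedDane_inexact_le hLf hμ hf hflip hx hFlip hinexact
    _ ≤ f w₀ - ⟪gradient f w₀, g⟫ / μ +
        (γ + LF / μ) * ‖gradient f w₀‖ * (‖g‖ / (μ - lam)) +
        Lf * ((1 + γ) * (‖g‖ / (μ - lam))) ^ 2 := by gcongr
    _ = _ := by rw [mul_pow, div_pow]; ring

end InnerProductSpace

section Sampling

variable {E : Type*} [NormedAddCommGroup E] [InnerProductSpace ℝ E]

theorem norm_inv_card_smul_sum_sq_le {ι : Type*} [Fintype ι] [Nonempty ι] (v : ι → E) :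
    ‖(Fintype.card ι : ℝ)⁻¹ • ∑ i, v i‖ ^ 2 ≤ (Fintype.card ι : ℝ)⁻¹ * ∑ i, ‖v i‖ ^ 2 := by
  have hn : (0 : ℝ) < Fintype.card ι := by positivity
  have hsum : ‖∑ i, v i‖ ^ 2 ≤ Fintype.card ι * ∑ i, ‖v i‖ ^ 2 :=
    (pow_le_pow_left₀ (norm_nonneg _) (norm_sum_le _ _) 2).trans
      (by simpa using sq_sum_le_card_mul_sum_sq (s := Finset.univ) (f := fun i => ‖v i‖))
  rw [norm_smul, mul_pow, Real.norm_eq_abs, abs_inv, abs_of_pos hn]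
  calc _ ≤ (Fintype.card ι : ℝ)⁻¹ ^ 2 * (Fintype.card ι * ∑ i, ‖v i‖ ^ 2) := by gcongr
    _ = _ := by field_simp

theorem Fintype.sum_sum_mul_mul_le {α β : Type*} [Fintype α] [Fintype β] {π : α → ℝ}
    {p : β → ℝ} (hπ : ∀ a, 0 ≤ π a) (hp0 : ∀ b, 0 ≤ p b) (hp : ∑ b, p b = 1)
    {X : β → α → ℝ} {R : α → ℝ} (hXR : ∀ b a, X b a ≤ R a) :
    ∑ a, ∑ b, (π a * p b) * X b a ≤ ∑ a, π a * R a := by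
  gcongr with a
  calc ∑ b, (π a * p b) * X b a ≤ ∑ b, (π a * p b) * R a := by
        gcongr with b
        · exact mul_nonneg (hπ a) (hp0 b)
        · exact hXR b a
    _ = π a * R a := by rw [← Finset.sum_mul, ← Finset.mul_sum, hp, mul_one]

theorem Fintype.sum_sum_mul_mul_le_of_le_add {α β : Type*} [Fintype α] [Fintype β]
    {π : α → ℝ} {p : β → ℝ} (hπ0 : ∀ a, 0 ≤ π a) (hπ : ∑ a, π a = 1) (hp0 : ∀ b, 0 ≤ p b)
    (hp : ∑ b, p b = 1) {X : β → α → ℝ} {Y Z : α → ℝ} {c₀ c₁ c₂ y z : ℝ} (hc₂ : 0 ≤ c₂)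
    (hX : ∀ b a, X b a ≤ c₀ + c₁ * Y a + c₂ * Z a)
    (hY : ∑ a, π a * Y a = y) (hZ : ∑ a, π a * Z a ≤ z) :
    ∑ a, ∑ b, (π a * p b) * X b a ≤ c₀ + c₁ * y + c₂ * z := by
  calc _ ≤ ∑ a, π a * (c₀ + c₁ * Y a + c₂ * Z a) := Fintype.sum_sum_mul_mul_le hπ0 hp0 hp hX
    _ = c₀ + c₁ * ∑ a, π a * Y a + c₂ * ∑ a, π a * Z a := by
      simp only [mul_add, Finset.sum_add_distrib, ← Finset.sum_mul, hπ, one_mul, Finset.mul_sum,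
        mul_left_comm c₁, mul_left_comm c₂]
    _ ≤ _ := by
      rw [hY]
      gcongr

variable {ι κ : Type*} [Fintype ι] [DecidableEq ι] [Fintype κ]

theorem Fintype.sum_prod_apply_eq_one {R : Type*} [CommSemiring R] {p : κ → R}
    (hp : ∑ k, p k = 1) : ∑ σ : ι → κ, ∏ i, p (σ i) = 1 := by
  rw [← Fintype.prod_sum (fun (_ : ι) k => p k)]
  simp [hp]

theorem Fintype.sum_prod_apply_mul_apply {R : Type*} [CommSemiring R] {p : κ → R}
    (hp : ∑ k, p k = 1) (a : κ → R) (i₀ : ι) :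
    ∑ σ : ι → κ, (∏ i, p (σ i)) * a (σ i₀) = ∑ k, p k * a k := by
  -- The weight of `σ` factorizes over the coordinates, so the sum over `σ` is a product of sums.
  have hfactor : ∀ σ : ι → κ, (∏ i, p (σ i)) * a (σ i₀) =
      ∏ i, (if i = i₀ then p (σ i) * a (σ i) else p (σ i)) := by
    intro σ
    calc _ = ∏ i, p (σ i) * (if i = i₀ then a (σ i) else 1) := by
          rw [Finset.prod_mul_distrib, Finset.prod_ite_eq']
          simp
      _ = _ := Finset.prod_congr rfl fun i _ => by split_ifs <;> simp
  simp_rw [hfactor]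
  rw [← Fintype.prod_sum (fun i k => if i = i₀ then p k * a k else p k)]
  simp [hp]

theorem Fintype.sum_prod_apply_mul_mean [Nonempty ι] {p : κ → ℝ} (hp : ∑ k, p k = 1)
    (a : κ → ℝ) :
    ∑ σ : ι → κ, (∏ i, p (σ i)) * ((Fintype.card ι : ℝ)⁻¹ * ∑ i, a (σ i)) =
      ∑ k, p k * a k := by
  simp_rw [Finset.mul_sum, mul_left_comm _ (Fintype.card ι : ℝ)⁻¹]
  rw [Finset.sum_comm]
  simp_rw [← Finset.mul_sum, Fintype.sum_prod_apply_mul_apply hp, Finset.sum_const,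
    Finset.card_univ, nsmul_eq_mul, ← mul_assoc]
  rw [inv_mul_cancel₀ (by positivity), one_mul]

theorem Fintype.sum_prod_apply_mul_inner_mean [Nonempty ι] {p : κ → ℝ} (hp : ∑ k, p k = 1)
    (G : E) (v : κ → E) :
    ∑ σ : ι → κ, (∏ i, p (σ i)) * ⟪G, (Fintype.card ι : ℝ)⁻¹ • ∑ i, v (σ i)⟫ =
      ⟪G, ∑ k, p k • v k⟫ := by
  simp only [inner_sum, real_inner_smul_right]
  exact Fintype.sum_prod_apply_mul_mean (ι := ι) hp fun k => ⟪G, v k⟫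

theorem Fintype.sum_prod_apply_mul_norm_mean_sq_le [Nonempty ι] {p : κ → ℝ}
    (hp0 : ∀ k, 0 ≤ p k) (hp : ∑ k, p k = 1) (v : κ → E) :
    ∑ σ : ι → κ, (∏ i, p (σ i)) * ‖(Fintype.card ι : ℝ)⁻¹ • ∑ i, v (σ i)‖ ^ 2 ≤
      ∑ k, p k * ‖v k‖ ^ 2 := by
  rw [← Fintype.sum_prod_apply_mul_mean (ι := ι) hp]
  gcongr with σ
  · exact Finset.prod_nonneg fun i _ => hp0 _
  · exact norm_inv_card_smul_sum_sq_le _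

end Sampling

theorem feddane_sufficient_decrease_nonconvex_general {d N K : ℕ} (hK : 0 < K)
    (F : Fin N → EuclideanSpace ℝ (Fin d) → ℝ) (hF : ∀ k, ContDiff ℝ 1 (F k))
    (p : Fin N → ℝ) (hp : ∀ k, 0 ≤ p k) (hpsum : ∑ k, p k = 1)
    (f : EuclideanSpace ℝ (Fin d) → ℝ) (hf : f = fun w => ∑ k, p k * F k w)
    (w₀ : EuclideanSpace ℝ (Fin d)) (lam μ γ L B : ℝ)
    (hlam : 0 ≤ lam) (hμ : lam < μ) (hγ0 : 0 ≤ γ) (hL : 0 ≤ L)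
    (hweak : ∀ k, ConvexOn ℝ Set.univ fun w => F k w + lam / 2 * ‖w‖ ^ 2)
    (hFlip : ∀ k x y, ‖gradient (F k) x - gradient (F k) y‖ ≤ L * ‖x - y‖)
    (hflip : ∀ x y, ‖gradient f x - gradient f y‖ ≤ L * ‖x - y‖)
    (hdissim : ∑ k, p k * ‖gradient (F k) w₀‖ ^ 2 ≤ B ^ 2 * ‖gradient f w₀‖ ^ 2)
    (gs : (Fin K → Fin N) → EuclideanSpace ℝ (Fin d))
    (hgs : gs = fun σ => (1 / (K : ℝ)) • ∑ i, gradient (F (σ i)) w₀)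
    (P : Fin N → EuclideanSpace ℝ (Fin d) → EuclideanSpace ℝ (Fin d) → ℝ)
    (hP : P = fun m gv v =>
      F m v + ⟪gv - gradient (F m) w₀, v - w₀⟫ + μ / 2 * ‖v - w₀‖ ^ 2)
    (w wbar : Fin N → (Fin K → Fin N) → EuclideanSpace ℝ (Fin d))
    (hmin : ∀ m σ v, P m (gs σ) (wbar m σ) ≤ P m (gs σ) v)
    (hinexact : ∀ m σ, ‖w m σ - wbar m σ‖ ≤ γ * ‖wbar m σ - w₀‖)
    (ρ : ℝ)
    (hρ : ρ = 1 / μ - 3 * γ / (2 * (μ - lam)) - L * (1 + γ) ^ 2 / (μ - lam) ^ 2 -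
      3 * L / (2 * μ * (μ - lam)) -
      (B ^ 2 - 1) * (L * (1 + γ) ^ 2 / (μ - lam) ^ 2 + L / (μ * (μ - lam)) +
        γ / (μ - lam))) :
    (∑ σ : Fin K → Fin N, ∑ j : Fin N,
        ((∏ i, p (σ i)) * p j) * f (w j σ)) ≤
      f w₀ - ρ * ‖gradient f w₀‖ ^ 2 := by
  subst hP
  have hμ0 : 0 < μ := hlam.trans_lt hμ
  have hFd : ∀ k, Differentiable ℝ (F k) := fun k => (hF k).differentiable one_ne_zero
  have hfgrad : ∀ x, HasGradientAt f (∑ k, p k • gradient (F k) x) x := by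
    subst hf
    exact fun x => hasGradientAt_sum_mul _ p fun k _ => hFd k x
  set G := gradient f w₀
  set c₁ := (γ + L / μ) / (μ - lam)
  set c₂ := L * (1 + γ) ^ 2 / (μ - lam) ^ 2
  have hc₁ : 0 ≤ c₁ := div_nonneg (by positivity) (sub_pos.mpr hμ).le
  have hstep : ∀ m σ, f (w m σ) ≤
      (f w₀ + c₁ / 2 * ‖G‖ ^ 2) + (-1 / μ) * ⟪G, gs σ⟫ + (c₁ / 2 + c₂) * ‖gs σ‖ ^ 2 := by
    intro m σ
    have hmin' : IsMinOn (fedDaneSubproblem (F m) w₀ (gs σ) μ) Set.univ (wbar m σ) :=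
      fun v _ => hmin m σ v
    have hbound := hmin'.fedDane_inexact_le_of_weaklyConvex hL hL hγ0 hμ0 hμ
      (fun x => (hfgrad x).differentiableAt) hflip (hweak m) (hFd m _) (hFd m w₀)
      (hFlip m _ _) (hinexact m σ)
    have hamgm := mul_le_mul_of_nonneg_left (two_mul_le_add_sq ‖G‖ ‖gs σ‖) hc₁
    rw [neg_div, neg_mul, one_div_mul_eq_div]
    linarith
  have : Nonempty (Fin K) := Fin.pos_iff_nonempty.mp hK
  have hgs' : ∀ σ, gs σ = (Fintype.card (Fin K) : ℝ)⁻¹ • ∑ i, gradient (F (σ i)) w₀ := by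
    simp [hgs]
  have hmean : ∑ σ : Fin K → Fin N, (∏ i, p (σ i)) * ⟪G, gs σ⟫ = ‖G‖ ^ 2 := by
    simp only [hgs']
    rw [Fintype.sum_prod_apply_mul_inner_mean hpsum G fun k => gradient (F k) w₀,
      ← (hfgrad w₀).gradient, real_inner_self_eq_norm_sq]
  have hvar : ∑ σ : Fin K → Fin N, (∏ i, p (σ i)) * ‖gs σ‖ ^ 2 ≤ B ^ 2 * ‖G‖ ^ 2 := by
    simpa only [hgs'] using (Fintype.sum_prod_apply_mul_norm_mean_sq_le hp hpsum
      fun k => gradient (F k) w₀).trans hdissim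
  have hρ_add : ρ + B ^ 2 * c₁ / 2 = 1 / μ - c₁ / 2 - (c₁ / 2 + c₂) * B ^ 2 := by
    have hgap : μ - lam ≠ 0 := (sub_pos.mpr hμ).ne'
    rw [hρ]
    simp only [c₁, c₂]
    field_simp
    ring
  calc _ ≤ (f w₀ + c₁ / 2 * ‖G‖ ^ 2) + (-1 / μ) * ‖G‖ ^ 2 + (c₁ / 2 + c₂) * (B ^ 2 * ‖G‖ ^ 2) :=
      Fintype.sum_sum_mul_mul_le_of_le_add (fun σ => Finset.prod_nonneg fun i _ => hp _)
        (Fintype.sum_prod_apply_eq_one hpsum) hp hpsum (by positivity) hstep hmean hvar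
    _ ≤ f w₀ - ρ * ‖G‖ ^ 2 := by
      linear_combination ‖G‖ ^ 2 * hρ_add +
        mul_nonneg (mul_nonneg (sq_nonneg B) hc₁) (sq_nonneg ‖G‖) / 2

/-- Theorem 2, sufficient decrease, non-convex case.  Each `F k`
has `L`-Lipschitz gradient and is `λ`-weakly convex, `μ > λ ≥ 0`, `f` has
`L`-Lipschitz gradient, and the local functions are `B`-locally dissimilar at `w₀`.
Sample `K` i.i.d. device indices (expectation = sum over `σ : Fin K → Fin N` with
weight `∏ i, p (σ i)`), set `gs σ = (1/K) ∑ i, ∇F_{σ i}(w₀)`, and sample an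
independent device `j` with probability `p j`.  For each device `m` and realization
`σ`, `w m σ` is a `γ`-inexact minimizer of the FedDANE subproblem with gradient
estimate `gs σ`.  If
`ρ = 1/μ - 3γ/(2(μ-λ)) - L(1+γ)²/(μ-λ)² - 3L/(2μ(μ-λ))
     - (B²-1)(L(1+γ)²/(μ-λ)² + L/(μ(μ-λ)) + γ/(μ-λ)) > 0`,
then `E[f(w_j(g))] ≤ f(w₀) - ρ ‖∇f(w₀)‖²`. -/
theorem feddane_sufficient_decrease_nonconvex {d N K : ℕ} (hK : 0 < K)
    (F : Fin N → EuclideanSpace ℝ (Fin d) → ℝ) (hF : ∀ k, ContDiff ℝ 1 (F k))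
    (p : Fin N → ℝ) (hp : ∀ k, 0 ≤ p k) (hpsum : ∑ k, p k = 1)
    (f : EuclideanSpace ℝ (Fin d) → ℝ) (hf : f = fun w => ∑ k, p k * F k w)
    (w₀ : EuclideanSpace ℝ (Fin d)) (lam μ γ L B : ℝ)
    (hlam : 0 ≤ lam) (hμ : lam < μ) (hγ0 : 0 ≤ γ) (hγ1 : γ < 1) (hL : 0 ≤ L)
    (hB : 1 ≤ B)
    (hweak : ∀ k, ConvexOn ℝ Set.univ fun w => F k w + lam / 2 * ‖w‖ ^ 2)
    (hFlip : ∀ k x y, ‖gradient (F k) x - gradient (F k) y‖ ≤ L * ‖x - y‖)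
    (hflip : ∀ x y, ‖gradient f x - gradient f y‖ ≤ L * ‖x - y‖)
    (hdissim : ∑ k, p k * ‖gradient (F k) w₀‖ ^ 2 ≤ B ^ 2 * ‖gradient f w₀‖ ^ 2)
    (gs : (Fin K → Fin N) → EuclideanSpace ℝ (Fin d))
    (hgs : gs = fun σ => (1 / (K : ℝ)) • ∑ i, gradient (F (σ i)) w₀)
    (P : Fin N → EuclideanSpace ℝ (Fin d) → EuclideanSpace ℝ (Fin d) → ℝ)
    (hP : P = fun m gv v =>
      F m v + ⟪gv - gradient (F m) w₀, v - w₀⟫ + μ / 2 * ‖v - w₀‖ ^ 2)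
    (w wbar : Fin N → (Fin K → Fin N) → EuclideanSpace ℝ (Fin d))
    (hmin : ∀ m σ v, P m (gs σ) (wbar m σ) ≤ P m (gs σ) v)
    (hinexact : ∀ m σ, ‖w m σ - wbar m σ‖ ≤ γ * ‖wbar m σ - w₀‖)
    (ρ : ℝ)
    (hρ : ρ = 1 / μ - 3 * γ / (2 * (μ - lam)) - L * (1 + γ) ^ 2 / (μ - lam) ^ 2 -
      3 * L / (2 * μ * (μ - lam)) -
      (B ^ 2 - 1) * (L * (1 + γ) ^ 2 / (μ - lam) ^ 2 + L / (μ * (μ - lam)) +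
        γ / (μ - lam)))
    (hρpos : 0 < ρ) :
    (∑ σ : Fin K → Fin N, ∑ j : Fin N,
        ((∏ i, p (σ i)) * p j) * f (w j σ)) ≤
      f w₀ - ρ * ‖gradient f w₀‖ ^ 2 :=
  feddane_sufficient_decrease_nonconvex_general hK F hF p hp hpsum f hf w₀ lam μ γ L B hlam hμ hγ0
    hL hweak hFlip hflip hdissim gs hgs P hP w wbar hmin hinexact ρ hρ
end
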